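/- Let (B, 𝔼, 𝔰) be an extriangulated category, let A ↣ B ↠ C be an 𝔼-triangle realizing δ ∈ 𝔼(C,A), and let f: A → D be a morphism. Suppose D ↣ E ↠ C is a conflation realizing f_*δ and there is a commutative diagram with rows these two conflations, vertical maps f: A → D, g: B → E, and identity on C. Then there exists g': B → E such that the sequence A → D ⊕ B → E, with first map having components (−f, a) and second map (d, g'), is a conflation, and moreover g' ∘ a = d ∘ f and e ∘ g' = b, where a: A ↣ B, b: B ↠ C, d: D ↣ E, e: E ↠ C are the given inflations/deflations. -/

import Mathlib

open CategoryTheory Category Limits Opposite ZeroObject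

universe v u

namespace ExtStmt

variable (B : Type u) [Category.{v} B] [Preadditive B] [HasZeroObject B] [HasBinaryBiproducts B]

/-- An extriangulated category structure on an additive category `B`,
following Nakaoka–Palu. `E` is the biadditive extension bifunctor, and `Real δ X a b`
expresses that the sequence `A ⟶ X ⟶ C` (given by `a`, `b`) belongs to the equivalence
class `𝔰(δ)`, i.e. realizes the extension `δ ∈ 𝔼(C, A)`. -/
structure Extriangulated where
  /-- The extension bifunctor `𝔼 : Bᵒᵖ × B ⥤ Ab`. -/
  E : Bᵒᵖ ⥤ B ⥤ AddCommGrpCat.{v}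
  /-- `𝔼(C, -)` is additive. -/
  addE₁ : ∀ C : Bᵒᵖ, (E.obj C).Additive
  /-- `𝔼(-, A)` is additive. -/
  addE₂ : ∀ A : B, (E.flip.obj A).Additive
  /-- The realization: `Real δ X a b` means `A ⟶ X ⟶ C` realizes `δ ∈ 𝔼(C, A)`. -/
  Real : ∀ {A C : B}, ((E.obj (op C)).obj A) → ∀ (X : B), (A ⟶ X) → (X ⟶ C) → Prop
  /-- Every extension is realized by some sequence. -/
  real_ex : ∀ {A C : B} (δ : (E.obj (op C)).obj A),
    ∃ (X : B) (a : A ⟶ X) (b : X ⟶ C), Real δ X a b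
  /-- `𝔰(δ)` is closed under the equivalence of sequences. -/
  real_iso : ∀ {A C X X' : B} (δ : (E.obj (op C)).obj A) (a : A ⟶ X) (b : X ⟶ C) (i : X ≅ X'),
    Real δ X a b → Real δ X' (a ≫ i.hom) (i.inv ≫ b)
  /-- Any two realizations of `δ` are equivalent sequences. -/
  real_unique : ∀ {A C X X' : B} (δ : (E.obj (op C)).obj A) (a : A ⟶ X) (b : X ⟶ C)
    (a' : A ⟶ X') (b' : X' ⟶ C), Real δ X a b → Real δ X' a' b' →
    ∃ i : X ≅ X', a ≫ i.hom = a' ∧ i.hom ≫ b' = b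
  /-- Realization of morphisms of extensions: if `f_*δ = h^*δ'` then the pair `(f, h)` is
  realized by some `(f, g, h)`. -/
  real_mor : ∀ {A C A' C' X X' : B} (δ : (E.obj (op C)).obj A) (δ' : (E.obj (op C')).obj A')
    (f : A ⟶ A') (h : C ⟶ C') (a : A ⟶ X) (b : X ⟶ C) (a' : A' ⟶ X') (b' : X' ⟶ C'),
    Real δ X a b → Real δ' X' a' b' →
    ((E.obj (op C)).map f) δ = ((E.map h.op).app A') δ' →
    ∃ g : X ⟶ X', a ≫ g = f ≫ a' ∧ g ≫ b' = b ≫ h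
  /-- Additivity of the realization: `0` is realized by the split sequence. -/
  real_zero : ∀ (A C : B),
    Real (0 : (E.obj (op C)).obj A) (A ⊞ C) biprod.inl biprod.snd
  /-- Additivity of the realization: direct sums. -/
  real_sum : ∀ {A C A' C' X X' : B} (δ : (E.obj (op C)).obj A) (δ' : (E.obj (op C')).obj A')
    (a : A ⟶ X) (b : X ⟶ C) (a' : A' ⟶ X') (b' : X' ⟶ C'),
    Real δ X a b → Real δ' X' a' b' →
    Real (((E.map (biprod.fst : C ⊞ C' ⟶ C).op).app (A ⊞ A'))
            (((E.obj (op C)).map (biprod.inl : A ⟶ A ⊞ A')) δ)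
          + ((E.map (biprod.snd : C ⊞ C' ⟶ C').op).app (A ⊞ A'))
            (((E.obj (op C')).map (biprod.inr : A' ⟶ A ⊞ A')) δ'))
      (X ⊞ X') (biprod.map a a') (biprod.map b b')
  /-- Axiom (ET3). -/
  et3 : ∀ {A C A' C' X X' : B} (δ : (E.obj (op C)).obj A) (δ' : (E.obj (op C')).obj A')
    (a : A ⟶ X) (b : X ⟶ C) (a' : A' ⟶ X') (b' : X' ⟶ C') (f : A ⟶ A') (g : X ⟶ X'),
    Real δ X a b → Real δ' X' a' b' → a ≫ g = f ≫ a' →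
    ∃ h : C ⟶ C', g ≫ b' = b ≫ h ∧ ((E.obj (op C)).map f) δ = ((E.map h.op).app A') δ'
  /-- Axiom (ET3ᵒᵖ). -/
  et3op : ∀ {A C A' C' X X' : B} (δ : (E.obj (op C)).obj A) (δ' : (E.obj (op C')).obj A')
    (a : A ⟶ X) (b : X ⟶ C) (a' : A' ⟶ X') (b' : X' ⟶ C') (g : X ⟶ X') (h : C ⟶ C'),
    Real δ X a b → Real δ' X' a' b' → g ≫ b' = b ≫ h →
    ∃ f : A ⟶ A', a ≫ g = f ≫ a' ∧ ((E.obj (op C)).map f) δ = ((E.map h.op).app A') δ'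
  /-- Axiom (ET4). -/
  et4 : ∀ {A B₀ D C₀ F : B} (δ : (E.obj (op D)).obj A) (δ' : (E.obj (op F)).obj B₀)
    (a : A ⟶ B₀) (a' : B₀ ⟶ D) (bb : B₀ ⟶ C₀) (b' : C₀ ⟶ F),
    Real δ B₀ a a' → Real δ' C₀ bb b' →
    ∃ (E₀ : B) (c' : C₀ ⟶ E₀) (δ'' : (E.obj (op E₀)).obj A) (d : D ⟶ E₀) (e : E₀ ⟶ F),
      Real δ'' C₀ (a ≫ bb) c' ∧
      Real (((E.obj (op F)).map a') δ') E₀ d e ∧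
      a' ≫ d = bb ≫ c' ∧ c' ≫ e = b' ∧
      ((E.map d.op).app A) δ'' = δ ∧
      ((E.obj (op E₀)).map a) δ'' = ((E.map e.op).app B₀) δ'
  /-- Axiom (ET4ᵒᵖ). -/
  et4op : ∀ {A C₀ E₀ D F : B} (δ'' : (E.obj (op E₀)).obj A) (θ : (E.obj (op F)).obj D)
    (c : A ⟶ C₀) (c' : C₀ ⟶ E₀) (d : D ⟶ E₀) (e : E₀ ⟶ F),
    Real δ'' C₀ c c' → Real θ E₀ d e →
    ∃ (B₀ : B) (a : A ⟶ B₀) (a' : B₀ ⟶ D) (bb : B₀ ⟶ C₀)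
      (δ : (E.obj (op D)).obj A) (δ' : (E.obj (op F)).obj B₀),
      Real δ B₀ a a' ∧ Real δ' C₀ bb (c' ≫ e) ∧
      a ≫ bb = c ∧ a' ≫ d = bb ≫ c' ∧
      θ = ((E.obj (op F)).map a') δ' ∧
      ((E.map d.op).app A) δ'' = δ ∧
      ((E.obj (op E₀)).map a) δ'' = ((E.map e.op).app B₀) δ'

variable {B}

/-- The group of extensions `𝔼(C, A)`. -/
abbrev Extriangulated.Ext (T : Extriangulated B) (C A : B) : Type v :=
  (T.E.obj (op C)).obj A

/-- `f_*δ`, the pushforward of an extension along `f : A ⟶ A'`. -/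
abbrev Extriangulated.push (T : Extriangulated B) {C A A' : B} (f : A ⟶ A')
    (δ : T.Ext C A) : T.Ext C A' :=
  ((T.E.obj (op C)).map f) δ

/-- `g^*δ`, the pullback of an extension along `g : C ⟶ C'`. -/
abbrev Extriangulated.pull (T : Extriangulated B) {C C' A : B} (g : C ⟶ C')
    (δ : T.Ext C' A) : T.Ext C A :=
  ((T.E.map g.op).app A) δ

/-- A pair of composable morphisms is a conflation if it realizes some extension. -/
def Extriangulated.IsConflation (T : Extriangulated B) {A X C : B}
    (a : A ⟶ X) (b : X ⟶ C) : Prop :=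
  ∃ δ : T.Ext C A, T.Real δ X a b


set_option linter.unusedSectionVars false

section Hearts

variable {B : Type u} [Category.{v} B] [Preadditive B] [HasZeroObject B] [HasBinaryBiproducts B]

def wRel (Wp : B → Prop) (P : B → Prop) : HomRel (ObjectProperty.FullSubcategory P) :=
  fun {X Y} f g =>
    ∃ (Wo : B) (_ : Wp Wo) (p : X.obj ⟶ Wo) (q : Wo ⟶ Y.obj), p ≫ q = (f - g).hom

abbrev HeartCat (Wp : B → Prop) (P : B → Prop) := CategoryTheory.Quotient (wRel Wp P)

theorem wRel_congruence (Wp P : B → Prop) (hW0 : Wp (0 : B))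
    (hWbi : ∀ {X Y : B}, Wp X → Wp Y → Wp (X ⊞ Y)) : Congruence (wRel Wp P) where
  equivalence := by
    refine fun {X Y} => ⟨?_, ?_, ?_⟩
    · intro f
      exact ⟨0, hW0, 0, 0, by change _ = f.hom - f.hom; simp⟩
    · rintro f g ⟨Wo, hw, p, q, h⟩
      change _ = f.hom - g.hom at h
      exact ⟨Wo, hw, -p, q, by change _ = g.hom - f.hom; rw [Preadditive.neg_comp, h]; abel⟩
    · rintro f g h ⟨W₁, hw₁, p₁, q₁, h₁⟩ ⟨W₂, hw₂, p₂, q₂, h₂⟩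
      change _ = f.hom - g.hom at h₁
      change _ = g.hom - h.hom at h₂
      exact ⟨W₁ ⊞ W₂, hWbi hw₁ hw₂, biprod.lift p₁ p₂, biprod.desc q₁ q₂, by
        change _ = f.hom - h.hom
        rw [biprod.lift_desc, h₁, h₂]; abel⟩
  comp_left := by
    rintro X Y Z f g g' ⟨Wo, hw, p, q, h⟩
    change _ = g.hom - g'.hom at h
    exact ⟨Wo, hw, f.hom ≫ p, q, by
      change _ = f.hom ≫ g.hom - f.hom ≫ g'.hom
      rw [Category.assoc, h, Preadditive.comp_sub]⟩
  comp_right := by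
    rintro X Y Z f f' g ⟨Wo, hw, p, q, h⟩
    change _ = f.hom - f'.hom at h
    exact ⟨Wo, hw, p, q ≫ g.hom, by
      change _ = f.hom ≫ g.hom - f'.hom ≫ g.hom
      rw [← Category.assoc, h, Preadditive.sub_comp]⟩

theorem wRel_add (Wp P : B → Prop)
    (hWbi : ∀ {X Y : B}, Wp X → Wp Y → Wp (X ⊞ Y)) :
    ∀ ⦃X Y : ObjectProperty.FullSubcategory P⦄ (f₁ f₂ g₁ g₂ : X ⟶ Y) (_ : wRel Wp P f₁ f₂)
      (_ : wRel Wp P g₁ g₂), wRel Wp P (f₁ + g₁) (f₂ + g₂) := by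
  rintro X Y f₁ f₂ g₁ g₂ ⟨W₁, hw₁, p₁, q₁, h₁⟩ ⟨W₂, hw₂, p₂, q₂, h₂⟩
  change _ = f₁.hom - f₂.hom at h₁
  change _ = g₁.hom - g₂.hom at h₂
  exact ⟨W₁ ⊞ W₂, hWbi hw₁ hw₂, biprod.lift p₁ p₂, biprod.desc q₁ q₂, by
    change _ = (f₁.hom + g₁.hom) - (f₂.hom + g₂.hom)
    rw [biprod.lift_desc, h₁, h₂]; abel⟩

/-- The heart is preadditive. -/
def heartPreadditive (Wp P : B → Prop) (hW0 : Wp (0 : B))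
    (hWbi : ∀ {X Y : B}, Wp X → Wp Y → Wp (X ⊞ Y)) : Preadditive (HeartCat Wp P) :=
  letI := wRel_congruence Wp P hW0 hWbi
  Quotient.preadditive _ (wRel_add Wp P hWbi)

/-- The heart has zero morphisms. -/
def heartZeroMorphisms (Wp P : B → Prop) (hW0 : Wp (0 : B))
    (hWbi : ∀ {X Y : B}, Wp X → Wp Y → Wp (X ⊞ Y)) : HasZeroMorphisms (HeartCat Wp P) :=
  letI := heartPreadditive Wp P hW0 hWbi
  inferInstance

/-- A full additive subcategory closed under direct summands and isomorphisms. -/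
structure IsGoodSubcat (P : B → Prop) : Prop where
  mem_of_iso : ∀ {X Y : B}, (X ≅ Y) → P X → P Y
  zero_mem : P (0 : B)
  biprod_mem : ∀ {X Y : B}, P X → P Y → P (X ⊞ Y)
  summand_mem : ∀ {X Y : B}, P (X ⊞ Y) → P X

/-- `(U, V)` is a cotorsion pair on the extriangulated category `(B, 𝔼, 𝔰)`. -/
structure IsCotorsionPair (T : Extriangulated B) (U V : B → Prop) : Prop where
  subU : IsGoodSubcat U
  subV : IsGoodSubcat V
  ext_vanish : ∀ {u v : B}, U u → V v → ∀ δ : T.Ext u v, δ = 0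
  cone : ∀ X : B, ∃ (v u : B) (f : v ⟶ u) (g : u ⟶ X), V v ∧ U u ∧ T.IsConflation f g
  cocone : ∀ X : B, ∃ (v u : B) (f : X ⟶ v) (g : v ⟶ u), V v ∧ U u ∧ T.IsConflation f g

/-- `((S,Tc),(U,V))` is a twin cotorsion pair: two cotorsion pairs with `𝔼(S, V) = 0`. -/
def IsTwinCotorsionPair (T : Extriangulated B) (S Tc U V : B → Prop) : Prop :=
  IsCotorsionPair T S Tc ∧ IsCotorsionPair T U V ∧
    ∀ {s v : B}, S s → V v → ∀ δ : T.Ext s v, δ = 0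

/-- Projective object of an extriangulated category. -/
def IsProjObj (T : Extriangulated B) (P : B) : Prop :=
  ∀ {A X C : B} (a : A ⟶ X) (b : X ⟶ C), T.IsConflation a b →
    ∀ c : P ⟶ C, ∃ d : P ⟶ X, d ≫ b = c

/-- Injective object of an extriangulated category. -/
def IsInjObj (T : Extriangulated B) (I : B) : Prop :=
  ∀ {A X C : B} (a : A ⟶ X) (b : X ⟶ C), T.IsConflation a b →
    ∀ c : A ⟶ I, ∃ d : X ⟶ I, a ≫ d = c

/-- `B` has enough projectives. -/
def HasEnoughProj (T : Extriangulated B) : Prop :=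
  ∀ C : B, ∃ (A P : B) (f : A ⟶ P) (p : P ⟶ C), IsProjObj T P ∧ T.IsConflation f p

/-- `B` has enough injectives. -/
def HasEnoughInj (T : Extriangulated B) : Prop :=
  ∀ A : B, ∃ (I C : B) (i : A ⟶ I) (p : I ⟶ C), IsInjObj T I ∧ T.IsConflation i p

/-- `W = Tc ∩ U`. -/
def Wpred (Tc U : B → Prop) : B → Prop := fun X => Tc X ∧ U X

/-- `CoCone(P, Q)`: objects `X` with a conflation `X ↣ P' ↠ Q'`, `P' ∈ P`, `Q' ∈ Q`. -/
def CoConeOf (T : Extriangulated B) (P Q : B → Prop) : B → Prop := fun X =>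
  ∃ (p q : B) (f : X ⟶ p) (g : p ⟶ q), P p ∧ Q q ∧ T.IsConflation f g

/-- `Cone(P, Q)`: objects `X` with a conflation `P' ↣ Q' ↠ X`, `P' ∈ P`, `Q' ∈ Q`. -/
def ConeOf (T : Extriangulated B) (P Q : B → Prop) : B → Prop := fun X =>
  ∃ (p q : B) (f : p ⟶ q) (g : q ⟶ X), P p ∧ Q q ∧ T.IsConflation f g

/-- `P * Q`: objects `X` with a conflation `P' ↣ X ↠ Q'`, `P' ∈ P`, `Q' ∈ Q`. -/
def StarOf (T : Extriangulated B) (P Q : B → Prop) : B → Prop := fun X =>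
  ∃ (p q : B) (f : p ⟶ X) (g : X ⟶ q), P p ∧ Q q ∧ T.IsConflation f g

/-- `B⁻ = CoCone(W, S)`. -/
def Bminus (T : Extriangulated B) (S Tc U : B → Prop) : B → Prop :=
  CoConeOf T (Wpred Tc U) S

/-- `B⁺ = Cone(V, W)`. -/
def Bplus (T : Extriangulated B) (Tc U V : B → Prop) : B → Prop :=
  ConeOf T V (Wpred Tc U)

/-- `H = B⁻ ∩ B⁺`, the objects of the heart. -/
def HeartPred (T : Extriangulated B) (S Tc U V : B → Prop) : B → Prop := fun X =>
  Bminus T S Tc U X ∧ Bplus T Tc U V X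

/-- The heart `H̄ = H/[W]` of a twin cotorsion pair. -/
abbrev TwinHeart (T : Extriangulated B) (S Tc U V : B → Prop) :=
  HeartCat (Wpred Tc U) (HeartPred T S Tc U V)

/-- Zero morphisms on the heart of a twin cotorsion pair. -/
def heartZeroOfTwin (T : Extriangulated B) {S Tc U V : B → Prop}
    (h : IsTwinCotorsionPair T S Tc U V) (P : B → Prop) :
    HasZeroMorphisms (HeartCat (Wpred Tc U) P) :=
  heartZeroMorphisms _ _ ⟨h.1.subV.zero_mem, h.2.1.subU.zero_mem⟩
    (fun hx hy => ⟨h.1.subV.biprod_mem hx.1 hy.1, h.2.1.subU.biprod_mem hx.2 hy.2⟩)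

end Hearts

/-!
Apply (ET4) to two composable inflations: the split conflation `A ⟶ D ⊞ A ⟶ D` sheared by `f`,
so that its inflation is `(-f, 𝟙)`, and the direct sum `D ⊞ A ⟶ D ⊞ X₀ ⟶ C` of `D = D ⟶ 0` with
the given conflation. The composite inflation is `(-f, a)`. The second conflation produced by
(ET4), `D ⟶ E₁ ⟶ C`, realizes `(fst + snd ≫ f)_* inr_* δ = f_* δ`, so it is isomorphic to
`D ⟶ E₀ ⟶ C`, and transporting the first one, `A ⟶ D ⊞ X₀ ⟶ E₁`, along this isomorphism gives
the required conflation.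
-/

namespace Extriangulated

variable {B : Type u} [Category.{v} B] [Preadditive B] [HasZeroObject B]
  [HasBinaryBiproducts B] (T : Extriangulated B)

lemma push_id {A C : B} (x : T.Ext C A) : T.push (𝟙 A) x = x := by simp [push]

lemma push_push {C A₁ A₂ A₃ : B} (f : A₁ ⟶ A₂) (g : A₂ ⟶ A₃) (x : T.Ext C A₁) :
    T.push g (T.push f x) = T.push (f ≫ g) x := by simp [push]

lemma pull_id {A C : B} (x : T.Ext C A) : T.pull (𝟙 C) x = x := by simp [pull]

lemma pull_pull {A C C' C'' : B} (g : C'' ⟶ C') (h : C' ⟶ C) (x : T.Ext C A) :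
    T.pull g (T.pull h x) = T.pull (g ≫ h) x := by simp [pull]

lemma real_id_zero (X : B) : T.Real (0 : T.Ext 0 X) X (𝟙 X) 0 := by
  convert T.real_iso _ _ _ (isoBiprodZero (isZero_zero B)).symm (T.real_zero X 0) using 2
  · simp
  · exact (isZero_zero B).eq_of_tgt _ _

variable {T}

lemma Real.exists_lift_of_comp_eq_zero {A C X Y : B} {δ : T.Ext C A} {p : A ⟶ X} {q : X ⟶ C}
    (hr : T.Real δ X p q) (t : Y ⟶ X) (ht : t ≫ q = 0) : ∃ u : Y ⟶ A, t = u ≫ p := by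
  obtain ⟨u, hu, -⟩ := T.et3op 0 δ (𝟙 Y) 0 p q t 0 (T.real_id_zero Y) hr (by simp [ht])
  exact ⟨u, by simpa using hu⟩

lemma Real.isIso_of_comp_eq {A C Y : B} {η : T.Ext C A} {p : A ⟶ Y} {q : Y ⟶ C}
    (hr : T.Real η Y p q) (φ : Y ⟶ Y) (hp : p ≫ φ = p) (hq : φ ≫ q = q) : IsIso φ := by
  obtain ⟨t, rfl⟩ : ∃ t, φ = 𝟙 Y + t := ⟨φ - 𝟙 Y, by abel⟩
  obtain ⟨u, rfl⟩ := hr.exists_lift_of_comp_eq_zero t (by simpa using hq)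
  -- `φ - 𝟙 = u ≫ p` is killed by `p`, so it squares to zero.
  have hpt : p ≫ u ≫ p = 0 := by simpa using hp
  exact ⟨𝟙 Y - u ≫ p, by simp [hpt], by simp [hpt]⟩

lemma Real.pull_iso {A C₁ C₂ Y : B} {η : T.Ext C₂ A} {p : A ⟶ Y} {q : Y ⟶ C₂}
    (hr : T.Real η Y p q) (h : C₁ ≅ C₂) : T.Real (T.pull h.hom η) Y p (q ≫ h.inv) := by
  obtain ⟨N, s, t, hN⟩ := T.real_ex (T.pull h.hom η)
  obtain ⟨w, hsw, hwq⟩ := T.real_mor _ η (𝟙 A) h.hom s t p q hN hr (T.push_id _)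
  obtain ⟨w', hpw', hw't⟩ := T.real_mor η _ (𝟙 A) h.inv p q s t hr hN
    (by
      change T.push (𝟙 A) η = T.pull h.inv (T.pull h.hom η)
      rw [push_id, pull_pull, h.inv_hom_id, pull_id])
  rw [id_comp] at hsw hpw'
  have : IsIso (w ≫ w') :=
    hN.isIso_of_comp_eq _ (by rw [reassoc_of% hsw, hpw']) (by simp [hw't, reassoc_of% hwq])
  have : IsIso (w' ≫ w) :=
    hr.isIso_of_comp_eq _ (by rw [reassoc_of% hpw', hsw]) (by simp [hwq, reassoc_of% hw't])
  have : IsSplitEpi w := IsSplitEpi.mk' ⟨inv (w' ≫ w) ≫ w', by simp⟩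
  have : Mono w := mono_of_mono w w'
  have : IsIso w := isIso_of_mono_of_isSplitEpi w
  have hinv : inv w ≫ t = q ≫ h.inv := by simp [IsIso.inv_comp_eq, reassoc_of% hwq]
  simpa [hsw, hinv] using T.real_iso _ s t (asIso w) hN

lemma real_zero_lift_neg {A D : B} (f : A ⟶ D) :
    T.Real (0 : T.Ext D A) (D ⊞ A) (biprod.lift (-f) (𝟙 A)) (biprod.fst + biprod.snd ≫ f) := by
  let shear : A ⊞ D ≅ D ⊞ A :=
    { hom := biprod.lift (biprod.snd - biprod.fst ≫ f) biprod.fst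
      inv := biprod.lift biprod.snd (biprod.fst + biprod.snd ≫ f) }
  convert T.real_iso _ _ _ shear (T.real_zero A D) using 2
  · ext <;> simp [shear]
  · simp [shear]

lemma Real.biprod_inr {A C X : B} {δ : T.Ext C A} {a : A ⟶ X} {b : X ⟶ C}
    (hr : T.Real δ X a b) (D : B) :
    T.Real (T.push (biprod.inr : A ⟶ D ⊞ A) δ) (D ⊞ X) (biprod.map (𝟙 D) a) (biprod.snd ≫ b) := by
  have hsum := T.real_sum 0 δ (𝟙 D) 0 a b (T.real_id_zero D) hr
  simp only [map_zero, zero_add] at hsum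
  simpa [pull_pull, pull_id] using hsum.pull_iso (isoZeroBiprod (isZero_zero B))

end Extriangulated

theorem stmt19_general {B : Type u} [Category.{v} B] [Preadditive B] [HasZeroObject B]
    [HasBinaryBiproducts B] (T : Extriangulated B) {A X₀ C D E₀ : B}
    (δ : T.Ext C A) (a : A ⟶ X₀) (b : X₀ ⟶ C) (hab : T.Real δ X₀ a b)
    (f : A ⟶ D) (d : D ⟶ E₀) (e : E₀ ⟶ C) (hde : T.Real (T.push f δ) E₀ d e) :
    ∃ g' : X₀ ⟶ E₀,
      T.IsConflation (biprod.lift (-f) a) (biprod.desc d g') ∧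
      a ≫ g' = f ≫ d ∧ g' ≫ e = b := by
  obtain ⟨E₁, c, δ'', d₁, e₁, hc, hde₁, hcomm, hce, -, -⟩ :=
    T.et4 0 _ _ _ _ _ (T.real_zero_lift_neg f) (hab.biprod_inr D)
  have hpush : T.push (biprod.fst + biprod.snd ≫ f) (T.push biprod.inr δ) = T.push f δ := by
    simp [T.push_push]
  obtain ⟨i, hdi, hie⟩ := T.real_unique _ d₁ e₁ d e (hpush ▸ hde₁) hde
  have hinl : biprod.inl ≫ c = d₁ := by simpa using (biprod.inl ≫= hcomm).symm
  have hinr : a ≫ biprod.inr ≫ c = f ≫ d₁ := by simpa using (biprod.inr ≫= hcomm).symm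
  refine ⟨biprod.inr ≫ c ≫ i.hom, ⟨T.pull i.inv δ'', ?_⟩, by rw [reassoc_of% hinr, hdi],
    by simp [hie, hce]⟩
  have hdesc : biprod.desc d (biprod.inr ≫ c ≫ i.hom) = c ≫ i.hom := by
    ext <;> simp [← hdi, reassoc_of% hinl]
  have hlift : biprod.lift (-f) (𝟙 A) ≫ biprod.map (𝟙 D) a = biprod.lift (-f) a := by
    ext <;> simp
  simpa [hdesc, hlift] using hc.pull_iso i.symm

/-- Liu–Nakaoka Prop. 1.20: given an 𝔼-triangle `A ↣ B ↠ C` realizing `δ`, a morphism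
`f : A ⟶ D`, a conflation `D ↣ E ↠ C` realizing `f_*δ`, and a commutative diagram with
vertical maps `f`, `g`, `𝟙 C`, there exists `g' : B ⟶ E` such that
`A → D ⊕ B → E` (with maps `(-f, a)` and `(d, g')`) is a conflation, `a ≫ g' = f ≫ d`
and `g' ≫ e = b`. -/
theorem stmt19 {B : Type u} [Category.{v} B] [Preadditive B] [HasZeroObject B]
    [HasBinaryBiproducts B] (T : Extriangulated B) {A X₀ C D E₀ : B}
    (δ : T.Ext C A) (a : A ⟶ X₀) (b : X₀ ⟶ C) (hab : T.Real δ X₀ a b)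
    (f : A ⟶ D) (d : D ⟶ E₀) (e : E₀ ⟶ C) (hde : T.Real (T.push f δ) E₀ d e)
    (g : X₀ ⟶ E₀) (hg₁ : a ≫ g = f ≫ d) (hg₂ : g ≫ e = b) :
    ∃ g' : X₀ ⟶ E₀,
      T.IsConflation (biprod.lift (-f) a) (biprod.desc d g') ∧
      a ≫ g' = f ≫ d ∧ g' ≫ e = b :=
  stmt19_general T δ a b hab f d e hde

end ExtStmt
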